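/- arXiv:2110.05618 — 2 statements merged into one kernel-verified Lean document; each statement's English description precedes it below -/
import Mathlib

section
/- Let f : 𝕋 → 𝕋 be C¹ with |f'| ≤ M everywhere, let α ∈ ℝ, and define G : 𝕋^N → 𝕋^N by (G(x))_i = f(x_i + (α/N)·Σ_{j=1}^N (x_j − x_i)) where the differences x_j − x_i are computed as real numbers of absolute value < η (i.e., assume max_{i,j}|x_i − x_j| < η in the lift). If M·|1 − α| < 1, then max_{i,j} |(G(x))_i − (G(x))_j| ≤ M·|1−α| · max_{i,j} |x_i − x_j| for all x with max_{i,j}|x_i−x_j| < η. -/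
open Set

noncomputable section

/-- for the diffusively coupled map on lifts
`(G(x))_i = f(x_i + (α/N)·Σ_j (x_j − x_i))`, with `f` (a lift of a C¹ circle map) satisfying
`|f'| ≤ M`, if `M·|1−α| < 1` then the pairwise distances (hence the configuration diameter)
contract by the factor `M·|1−α|`, for configurations of diameter `< η`. -/
theorem stmt6 (N : ℕ) (hN : 0 < N) (f : ℝ → ℝ) (hf : ContDiff ℝ 1 f)
    (M : ℝ) (hM : ∀ t : ℝ, |deriv f t| ≤ M)
    (α η : ℝ) (hη : 0 < η) (hcontr : M * |1 - α| < 1)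
    (x : Fin N → ℝ) (hdiam : ∀ i j : Fin N, |x i - x j| < η)
    (G : Fin N → ℝ)
    (hG : ∀ i : Fin N, G i = f (x i + (α / (N : ℝ)) * ∑ j : Fin N, (x j - x i))) :
    ∀ i j : Fin N, |G i - G j| ≤ M * |1 - α| * |x i - x j| := by
  intro i j
  have hdiff : Differentiable ℝ f := hf.differentiable one_ne_zero
  have hlip : ∀ a b : ℝ, |f a - f b| ≤ M * |a - b| := by
    intro a b
    have := Convex.norm_image_sub_le_of_norm_deriv_le
      (f := f) (C := M) (s := (univ : Set ℝ))
      (fun t _ => hdiff t)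
      (fun t _ => by simpa [Real.norm_eq_abs] using hM t)
      convex_univ (mem_univ b) (mem_univ a)
    simpa [Real.norm_eq_abs] using this
  set u : Fin N → ℝ := fun i => x i + (α / (N : ℝ)) * ∑ j : Fin N, (x j - x i)
  have hNne : (N : ℝ) ≠ 0 := Nat.cast_ne_zero.mpr hN.ne'
  have hu : u i - u j = (1 - α) * (x i - x j) := by
    simp only [u, Finset.sum_sub_distrib, Finset.sum_const, Finset.card_univ,
      Fintype.card_fin, nsmul_eq_mul]
    field_simp
    ring
  calc |G i - G j| = |f (u i) - f (u j)| := by rw [hG i, hG j]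
    _ ≤ M * |u i - u j| := hlip _ _
    _ = M * |1 - α| * |x i - x j| := by rw [hu, abs_mul, mul_assoc]
end
end

section
/- Let f(x) = 2x mod 1 on 𝕋 and h(x,y) = −(1/(10π))·sin(6πx)·cos(6πy). Set μ₁ = (1/2)(δ_{1/3} + δ_{2/3}) and μ₂ = δ₀, and for ℓ ∈ [0,1] define F(x) = f(x + ℓ∫h(x,y)dμ₁(y) + (1−ℓ)∫h(x,y)dμ₂(y)). Then F(0) = 0, F(1/3) = 2/3, F(2/3) = 1/3, and consequently F_*μ₁ = μ₁ and F_*μ₂ = μ₂, i.e. (μ₁, μ₂) is a fixed (chimera) state of the self-consistent transfer operator. -/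
set_option maxHeartbeats 1000000

open MeasureTheory Set Real

noncomputable section

abbrev Circle1 := AddCircle (1 : ℝ)

/-- `x ↦ sin(6πx)` descended to the circle. -/
def sinc : Circle1 → ℝ := AddCircle.liftIco 1 0 (fun x => Real.sin (6 * Real.pi * x))

/-- `y ↦ cos(6πy)` descended to the circle. -/
def cosc : Circle1 → ℝ := AddCircle.liftIco 1 0 (fun x => Real.cos (6 * Real.pi * x))

/-- The coupling `h(x,y) = −(1/(10π))·sin(6πx)·cos(6πy)` on the circle. -/
def hcoup (x y : Circle1) : ℝ := -(1 / (10 * Real.pi)) * sinc x * cosc y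

/-- The doubling map `f(x) = 2x mod 1` on the circle. -/
def doubling (x : Circle1) : Circle1 := x + x

/-- `μ₁ = (1/2)(δ_{1/3} + δ_{2/3})`. -/
def muOne : Measure Circle1 :=
  (1 / 2 : ENNReal) • (Measure.dirac (((1 : ℝ) / 3 : ℝ) : Circle1)
    + Measure.dirac (((2 : ℝ) / 3 : ℝ) : Circle1))

/-- `μ₂ = δ₀`. -/
def muTwo : Measure Circle1 := Measure.dirac (0 : Circle1)

/-- The coupled map `F(x) = f(x + ℓ∫h(x,y)dμ₁(y) + (1−ℓ)∫h(x,y)dμ₂(y))`. -/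
def Fchim (ℓ : ℝ) (x : Circle1) : Circle1 :=
  doubling (x + (((ℓ * ∫ y, hcoup x y ∂muOne + (1 - ℓ) * ∫ y, hcoup x y ∂muTwo) : ℝ) : Circle1))

lemma sinc_coe_zero : sinc ((0 : ℝ) : Circle1) = 0 := by
  rw [_root_.sinc, AddCircle.liftIco_coe_apply (by norm_num : (0:ℝ) ∈ Ico (0:ℝ) (0+1))]
  simp

lemma sinc_coe_third : sinc (((1:ℝ)/3 : ℝ) : Circle1) = 0 := by
  rw [_root_.sinc, AddCircle.liftIco_coe_apply (by norm_num : (1:ℝ)/3 ∈ Ico (0:ℝ) (0+1))]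
  rw [show 6 * Real.pi * ((1:ℝ)/3) = 2 * Real.pi by ring, Real.sin_two_pi]

lemma sinc_coe_two_third : sinc (((2:ℝ)/3 : ℝ) : Circle1) = 0 := by
  rw [_root_.sinc, AddCircle.liftIco_coe_apply (by norm_num : (2:ℝ)/3 ∈ Ico (0:ℝ) (0+1))]
  rw [show 6 * Real.pi * ((2:ℝ)/3) = (4:ℤ) * Real.pi by push_cast; ring,
    Real.sin_int_mul_pi]

lemma measurable_sinc : Measurable _root_.sinc := by
  have : _root_.sinc = (fun x => Real.sin (6 * Real.pi * x)) ∘ (Subtype.val) ∘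
      (AddCircle.measurableEquivIco (T := 1) 0) := rfl
  rw [this]
  exact ((Real.continuous_sin.comp (by continuity)).measurable.comp
    measurable_subtype_coe).comp (AddCircle.measurableEquivIco (T := 1) 0).measurable

lemma measurable_Fchim (ℓ : ℝ) : Measurable (Fchim ℓ) := by
  have hd : Measurable (doubling : Circle1 → Circle1) :=
    (continuous_id.add continuous_id).measurable
  apply hd.comp
  apply measurable_id.add
  apply (AddCircle.continuous_mk' 1).measurable.comp
  have h1 : ∀ x : Circle1, (∫ y, hcoup x y ∂muOne)
      = (-(1 / (10 * Real.pi)) * sinc x) * ∫ y, cosc y ∂muOne := by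
    intro x
    rw [← integral_const_mul]
    rfl
  have h2 : ∀ x : Circle1, (∫ y, hcoup x y ∂muTwo)
      = (-(1 / (10 * Real.pi)) * sinc x) * ∫ y, cosc y ∂muTwo := by
    intro x
    rw [← integral_const_mul]
    rfl
  simp only [h1, h2]
  exact (measurable_const.mul ((measurable_const.mul _root_.measurable_sinc).mul
      measurable_const)).add
    (measurable_const.mul ((measurable_const.mul _root_.measurable_sinc).mul measurable_const))

lemma Fchim_eq_doubling {ℓ : ℝ} {x : Circle1} (hx : sinc x = 0) :
    Fchim ℓ x = doubling x := by
  have h : ∀ μ : Measure Circle1, (∫ y, hcoup x y ∂μ) = 0 := by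
    intro μ
    simp [hcoup, hx]
  rw [Fchim, h, h]
  norm_num

/-- `F(0) = 0`, `F(1/3) = 2/3`, `F(2/3) = 1/3`, and consequently
`F_*μ₁ = μ₁` and `F_*μ₂ = μ₂`: `(μ₁, μ₂)` is a fixed (chimera) state. -/
theorem stmt8 (ℓ : ℝ) (hℓ : ℓ ∈ Set.Icc (0 : ℝ) 1) :
    Fchim ℓ (0 : Circle1) = 0
    ∧ Fchim ℓ (((1 : ℝ) / 3 : ℝ) : Circle1) = (((2 : ℝ) / 3 : ℝ) : Circle1)
    ∧ Fchim ℓ (((2 : ℝ) / 3 : ℝ) : Circle1) = (((1 : ℝ) / 3 : ℝ) : Circle1)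
    ∧ muOne.map (Fchim ℓ) = muOne
    ∧ muTwo.map (Fchim ℓ) = muTwo := by
  have hz : ((0:ℝ) : Circle1) = 0 := by
    exact_mod_cast rfl
  have h0 : Fchim ℓ (0 : Circle1) = 0 := by
    have he := Fchim_eq_doubling (ℓ := ℓ) (x := ((0:ℝ):Circle1)) sinc_coe_zero
    rw [hz] at he
    rw [he]
    simp [doubling]
  have h1 : Fchim ℓ (((1 : ℝ) / 3 : ℝ) : Circle1) = (((2 : ℝ) / 3 : ℝ) : Circle1) := by
    rw [Fchim_eq_doubling sinc_coe_third, doubling, ← AddCircle.coe_add]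
    norm_num
  have h2 : Fchim ℓ (((2 : ℝ) / 3 : ℝ) : Circle1) = (((1 : ℝ) / 3 : ℝ) : Circle1) := by
    rw [Fchim_eq_doubling sinc_coe_two_third, doubling, ← AddCircle.coe_add]
    have : ((2:ℝ)/3 + (2:ℝ)/3 : ℝ) = (1:ℝ)/3 + 1 := by ring
    rw [this, AddCircle.coe_add, AddCircle.coe_period, add_zero]
  refine ⟨h0, h1, h2, ?_, ?_⟩
  · rw [muOne, Measure.map_smul, Measure.map_add _ _ (measurable_Fchim ℓ),
      Measure.map_dirac' (measurable_Fchim ℓ), Measure.map_dirac' (measurable_Fchim ℓ),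
      h1, h2, add_comm]
  · rw [muTwo, Measure.map_dirac' (measurable_Fchim ℓ), h0]

end
end
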